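/- arXiv:2102.03182 — 3 statements merged into one kernel-verified Lean document; each statement's English description precedes it below -/
import Mathlib

section
/- Every vertex of the polytope P_n = {u ∈ ℝ_{≥0}^{n+1} : u_i + u_{i+1} ≤ 1 for all 0 ≤ i ≤ n−1} is a 0/1-vector with no two consecutive coordinates equal to 1. In particular, P_n is a lattice polytope. -/
/-!
Let `u ∈ P_n` and let `d` be `(-1)^i` on the coordinates `u_i ∉ {0, 1}` and `0` elsewhere.
If `u_i + u_{i+1} = 1`, then `u_i ∈ {0, 1}` exactly when `u_{i+1} ∈ {0, 1}`, so
`d_i + d_{i+1} = 0`; and `d_i = 0` when `u_i = 0`. Thus `d` does not move any tight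
constraint, so `u ± ε d ∈ P_n` for small `ε > 0`, and an extreme `u` forces `d = 0`,
i.e. every coordinate is `0` or `1`.
-/
open Filter Topology

theorem eq_zero_of_add_mem_of_sub_mem_of_mem_extremePoints {E : Type*} [AddCommGroup E]
    [Module ℝ E] {A : Set E} {u v : E} (hu : u ∈ A.extremePoints ℝ) (h₁ : u + v ∈ A)
    (h₂ : u - v ∈ A) : v = 0 :=
  add_eq_left.mp (hu.2 h₁ h₂ (mem_openSegment_add_sub u v))

section Polyhedron

variable {E ι : Type*} [AddCommGroup E] [Module ℝ E] [Finite ι]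
  (f : ι → E →ₗ[ℝ] ℝ) (c : ι → ℝ)

theorem eventually_add_smul_mem_setOf_forall_le {u d : E} (hu : ∀ k, f k u ≤ c k)
    (hd : ∀ k, f k u = c k → f k d = 0) :
    ∀ᶠ ε in 𝓝 (0 : ℝ), u + ε • d ∈ {x | ∀ k, f k x ≤ c k} := by
  refine eventually_all.2 fun k => ?_
  simp only [map_add, map_smul, smul_eq_mul]
  rcases (hu k).eq_or_lt with htight | hslack
  · exact .of_forall fun ε => by simp [hd k htight, htight]
  · have hcont : Continuous fun ε : ℝ => f k u + ε * f k d := by fun_prop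
    exact ((hcont.tendsto' 0 _ (by simp)).eventually_lt_const hslack).mono fun _ h => h.le

theorem eq_zero_of_mem_extremePoints_setOf_forall_le {u d : E}
    (hu : u ∈ {x | ∀ k, f k x ≤ c k}.extremePoints ℝ)
    (hd : ∀ k, f k u = c k → f k d = 0) :
    d = 0 := by
  have hneg : ∀ k, f k u = c k → f k (-d) = 0 := fun k hk => by simp [hd k hk]
  obtain ⟨ε, ⟨hplus, hminus⟩, hε⟩ :=
    (((eventually_add_smul_mem_setOf_forall_le f c hu.1 hd).and
      (eventually_add_smul_mem_setOf_forall_le f c hu.1 hneg)).filter_mono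
      nhdsWithin_le_nhds).and self_mem_nhdsWithin |>.exists (f := 𝓝[≠] (0:ℝ))
  rw [smul_neg, ← sub_eq_add_neg] at hminus
  have hεd : ε • d = 0 := eq_zero_of_add_mem_of_sub_mem_of_mem_extremePoints hu hplus hminus
  exact (smul_eq_zero.mp hεd).resolve_left hε

end Polyhedron

def pathConstraint (n : ℕ) : Fin (n + 1) ⊕ Fin n → (Fin (n + 1) → ℝ) →ₗ[ℝ] ℝ
  | .inl i => -LinearMap.proj (R := ℝ) (φ := fun _ => ℝ) i
  | .inr i => LinearMap.proj (R := ℝ) (φ := fun _ => ℝ) i.castSucc + LinearMap.proj i.succ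

def pathBound (n : ℕ) : Fin (n + 1) ⊕ Fin n → ℝ := Sum.elim 0 1

theorem setOf_pathConstraint_le (n : ℕ) :
    {x | ∀ k, pathConstraint n k x ≤ pathBound n k} =
      {v : Fin (n + 1) → ℝ |
        (∀ i, 0 ≤ v i) ∧ ∀ i : Fin n, v i.castSucc + v i.succ ≤ 1} := by
  ext v
  simp [Sum.forall, pathConstraint, pathBound]

noncomputable def fractionalAlternating {m : ℕ} (u : Fin m → ℝ) (i : Fin m) : ℝ :=
  if u i = 0 ∨ u i = 1 then 0 else (-1) ^ (i : ℕ)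

theorem fractionalAlternating_castSucc_add_succ {n : ℕ} {u : Fin (n + 1) → ℝ} {i : Fin n}
    (h : u i.castSucc + u i.succ = 1) :
    fractionalAlternating u i.castSucc + fractionalAlternating u i.succ = 0 := by
  have hsucc : u i.succ = 1 - u i.castSucc := by linarith
  by_cases hint : u i.castSucc = 0 ∨ u i.castSucc = 1
  · have : u i.succ = 0 ∨ u i.succ = 1 := by rw [hsucc]; rcases hint with h | h <;> simp [h]
    simp [fractionalAlternating, hint, this]
  · have : ¬(u i.succ = 0 ∨ u i.succ = 1) := by
      rw [hsucc]; contrapose! hint; rcases hint with h | h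
      · right; linarith
      · left; linarith
    simp [fractionalAlternating, hint, this, pow_succ]

theorem stmt1 (n : ℕ) (u : Fin (n+1) → ℝ)
    (hu : u ∈ Set.extremePoints ℝ {v : Fin (n+1) → ℝ |
      (∀ i, 0 ≤ v i) ∧ ∀ i : Fin n, v i.castSucc + v i.succ ≤ 1}) :
    (∀ i, u i = 0 ∨ u i = 1) ∧ ∀ i : Fin n, ¬(u i.castSucc = 1 ∧ u i.succ = 1) := by
  refine ⟨fun j => ?_, fun i ⟨h₁, h₂⟩ => ?_⟩
  · by_contra hj
    rw [← setOf_pathConstraint_le] at hu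
    have hd : fractionalAlternating u = 0 := by
      refine eq_zero_of_mem_extremePoints_setOf_forall_le _ _ hu ?_
      rintro (i | i) htight
      · have : u i = 0 := by simpa [pathConstraint, pathBound] using htight
        simp [pathConstraint, fractionalAlternating, this]
      · exact fractionalAlternating_castSucc_add_succ
          (by simpa [pathConstraint, pathBound] using htight)
    simpa [fractionalAlternating, hj] using congrFun hd j
  · linarith [hu.1.2 i]
end

section
/- Let f_k ∈ ℂ[x_0,…,x_n] be the coefficient of t^k in (x_0 + x_1 t + ⋯ + x_n t^n)^p. For k = mp + (p − a) with 0 ≤ m ≤ n−1 and 1 ≤ a ≤ p, the leading monomial of f_k with respect to the reverse lexicographic order (with x_0 ≺ x_1 ≺ ⋯ ≺ x_n) is x_m^a x_{m+1}^{p−a}; and for k = np the leading monomial is x_n^p. -/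
open MvPolynomial

/-- `u ≺ v` in the reverse lexicographic order (with `x_0 ≺ x_1 ≺ ⋯`):
at the smallest index where they differ, `u` has the larger exponent. -/
def revLexLt {N : ℕ} (u v : Fin N →₀ ℕ) : Prop :=
  ∃ i : Fin N, v i < u i ∧ ∀ j : Fin N, j < i → u j = v j

/-- The coefficient of `t^k` in `(x_0 + x_1 t + ⋯ + x_n t^n)^p`. -/
noncomputable def fcoeff (n p k : ℕ) : MvPolynomial (Fin (n+1)) ℂ :=
  Polynomial.coeff ((∑ i : Fin (n+1),
    Polynomial.C (X i : MvPolynomial (Fin (n+1)) ℂ) * Polynomial.X ^ (i : ℕ)) ^ p) k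

/-!
With the weight `x_i ↦ i`, `f_k` is the weight-`k` component of `(x_0 + ⋯ + x_n)^p`, so its
support consists exactly of the exponent vectors of degree `p` and weight `k`: the multinomial
coefficients never vanish. An exponent vector `e` that is nonzero below `m` is revlex-smaller
than `x_m^a x_{m+1}^{p-a}` already at its first nonzero entry. For `e` vanishing below `m`,
comparing weights termwise gives `(m+1)·p ≤ k + e_m` for `k = mp + (p - a)`, i.e. `a ≤ e_m`,
with equality only when `e` lives on `{m, m+1}`, that is, when `e` is `x_m^a x_{m+1}^{p-a}`
itself. For `k = np` the same first-entry argument shows that `x_n^p` beats every other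
monomial of degree `p`.
-/

namespace MvPolynomial

variable {σ R : Type*} [CommSemiring R]

theorem aeval_C_X_mul_X_pow_monomial (w : σ → ℕ) (e : σ →₀ ℕ) (r : R) :
    aeval (fun i => Polynomial.C (X i) * Polynomial.X ^ w i) (monomial e r) =
      Polynomial.monomial (Finsupp.weight w e) (monomial e r) := by
  rw [aeval_monomial, Finsupp.prod, ← Polynomial.C_mul_X_pow_eq_monomial]
  simp only [mul_pow, Finset.prod_mul_distrib, ← pow_mul, Finset.prod_pow_eq_pow_sum,
    Finsupp.weight_apply, Finsupp.sum, smul_eq_mul, mul_comm (w _), ← mul_assoc, ← map_pow,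
    ← map_prod, Polynomial.algebraMap_apply, ← Polynomial.C_mul]
  rw [monomial_eq, Finsupp.prod, algebraMap_eq]

theorem coeff_aeval_C_X_mul_X_pow (w : σ → ℕ) (q : MvPolynomial σ R) (k : ℕ) :
    (aeval (fun i => Polynomial.C (X i) * Polynomial.X ^ w i) q).coeff k =
      weightedHomogeneousComponent w k q := by
  classical
  induction q using MvPolynomial.induction_on' with
  | monomial e r =>
    rw [aeval_C_X_mul_X_pow_monomial, Polynomial.coeff_monomial,
      weightedHomogeneousComponent_of_mem (isWeightedHomogeneous_monomial w e r rfl)]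
    simp only [eq_comm]
  | add q₁ q₂ h₁ h₂ => simp [h₁, h₂]

end MvPolynomial

theorem fcoeff_eq_weightedHomogeneousComponent (n p k : ℕ) :
    fcoeff n p k = weightedHomogeneousComponent Fin.val k ((∑ i, X i) ^ p) := by
  rw [fcoeff, ← coeff_aeval_C_X_mul_X_pow]
  simp [map_sum]

theorem coeff_fcoeff_ne_zero_iff {n p k : ℕ} {e : Fin (n + 1) →₀ ℕ} :
    coeff e (fcoeff n p k) ≠ 0 ↔ e.degree = p ∧ Finsupp.weight Fin.val e = k := by
  classical
  rw [fcoeff_eq_weightedHomogeneousComponent, coeff_weightedHomogeneousComponent,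
    coeff_sum_X_pow_of_fintype]
  split_ifs <;> simp_all [Finsupp.degree_apply, Finsupp.sum, Finsupp.multinomial_eq,
    (Nat.multinomial_pos _ _).ne']


section RevLex

open Finsupp

variable {N : ℕ} {u : Fin N →₀ ℕ} {m m' : Fin N}

theorem revLexLt_of_ne_zero {v : Fin N →₀ ℕ} {i : Fin N} (hv : ∀ j ≤ i, v j = 0)
    (hu : u i ≠ 0) : revLexLt u v := by
  induction i using WellFoundedLT.induction with
  | ind i ih =>
    by_cases h : ∃ j < i, u j ≠ 0
    · obtain ⟨j, hji, hj⟩ := h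
      exact ih j hji (fun k hk => hv k (hk.trans hji.le)) hj
    · push Not at h
      exact ⟨i, by rw [hv i le_rfl]; omega, fun j hj => by rw [h j hj, hv j hj.le]⟩

theorem succ_mul_apply_le (hu : ∀ j < m, u j = 0) (j : Fin N) :
    (m + 1) * u j ≤ u j * j + if j = m then u j else 0 := by
  rcases lt_or_ge j m with hj | hj
  · simp [hu j hj]
  split_ifs with h
  · subst h; exact le_of_eq (by ring)
  · have : (m : ℕ) + 1 ≤ j := Fin.val_add_one_le_of_lt (lt_of_le_of_ne hj (Ne.symm h))
    nlinarith

theorem sum_succ_mul_apply :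
    ∑ j, (m + 1) * u j = (m + 1) * u.degree := by
  rw [← Finset.mul_sum, degree_eq_sum]

theorem sum_mul_val_add_ite :
    ∑ j, (u j * j + if j = m then u j else 0) = weight Fin.val u + u m := by
  simp [Finset.sum_add_distrib, weight_eq_sum]

theorem succ_mul_degree_le (hu : ∀ j < m, u j = 0) :
    (m + 1) * u.degree ≤ weight Fin.val u + u m := by
  rw [← sum_succ_mul_apply, ← sum_mul_val_add_ite]
  exact Finset.sum_le_sum fun j _ => succ_mul_apply_le hu j

theorem apply_eq_zero_of_succ_mul_degree_eq (hu : ∀ j < m, u j = 0)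
    (h : (m + 1) * u.degree = weight Fin.val u + u m) {j : Fin N} (hj : (m : ℕ) + 1 < j) :
    u j = 0 := by
  rw [← sum_succ_mul_apply, ← sum_mul_val_add_ite,
    Finset.sum_eq_sum_iff_of_le fun j _ => succ_mul_apply_le hu j] at h
  have hjm : j ≠ m := by rintro rfl; omega
  have := h j (Finset.mem_univ j)
  rw [if_neg hjm] at this
  nlinarith

theorem eq_single_add_single_of_forall (hmm' : m ≠ m')
    (hu : ∀ j, j ≠ m → j ≠ m' → u j = 0) : u = single m (u m) + single m' (u m') := by
  ext j
  by_cases hjm : j = m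
  · subst hjm; simp [hmm']
  by_cases hjm' : j = m'
  · subst hjm'; simp [hmm']
  simp [Ne.symm hjm, Ne.symm hjm', hu j hjm hjm']

theorem degree_single_add_single_sub {a p : ℕ} (hap : a ≤ p) :
    (single m a + single m' (p - a)).degree = p := by
  rw [map_add, degree_single, degree_single]
  omega

theorem weight_val_single_add_single_sub (hm' : (m' : ℕ) = m + 1) {a p : ℕ}
    (hap : a ≤ p) : weight Fin.val (single m a + single m' (p - a)) = m * p + (p - a) := by
  obtain ⟨b, rfl⟩ := Nat.exists_eq_add_of_le hap
  rw [map_add, weight_single, weight_single, hm', Nat.add_sub_cancel_left, smul_eq_mul,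
    smul_eq_mul]
  ring

theorem revLexLt_single_add_single (hm' : (m' : ℕ) = m + 1) {a p : ℕ} (hap : a ≤ p)
    (hdeg : u.degree = p) (hwt : weight Fin.val u = m * p + (p - a))
    (hne : u ≠ single m a + single m' (p - a)) :
    revLexLt u (single m a + single m' (p - a)) := by
  have hmm' : m ≠ m' := by rintro rfl; omega
  set v := single m a + single m' (p - a)
  have hv : ∀ j < m, v j = 0 := by
    intro j hj
    have : j ≠ m' := by rintro rfl; rw [Fin.lt_def] at hj; omega
    simp [v, hj.ne', Ne.symm this]
  by_cases h : ∃ j < m, u j ≠ 0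
  · obtain ⟨j, hjm, hj⟩ := h
    exact revLexLt_of_ne_zero (fun k hk => hv k (hk.trans_lt hjm)) hj
  push Not at h
  have hle := succ_mul_degree_le h
  rw [hdeg, hwt, add_one_mul] at hle
  rcases (show a ≤ u m by omega).lt_or_eq with hlt | heq
  · exact ⟨m, by simpa [v, single_apply, hmm'] using hlt, fun j hj => by rw [h j hj, hv j hj]⟩
  · have hzero : ∀ j, j ≠ m → j ≠ m' → u j = 0 := by
      intro j hjm hjm'
      rcases lt_or_gt_of_ne hjm with hj | hj
      · exact h j hj
      · refine apply_eq_zero_of_succ_mul_degree_eq h ?_ ?_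
        · rw [hdeg, hwt, ← heq, add_one_mul]; omega
        · have : (j : ℕ) ≠ m' := fun h' => hjm' (Fin.ext h')
          rw [Fin.lt_def] at hj; omega
    have hm'val : u m' = p - a := by
      rw [degree_eq_sum, Fintype.sum_eq_add m m' hmm' fun j hj => hzero j hj.1 hj.2] at hdeg
      omega
    refine absurd ?_ hne
    rw [eq_single_add_single_of_forall hmm' hzero, hm'val, ← heq]

theorem revLexLt_single_last {n : ℕ} {e : Fin (n + 1) →₀ ℕ}
    (hne : e ≠ single (Fin.last n) e.degree) : revLexLt e (single (Fin.last n) e.degree) := by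
  by_cases h : ∃ j < Fin.last n, e j ≠ 0
  · obtain ⟨j, hj, hju⟩ := h
    exact revLexLt_of_ne_zero (fun k hk => single_eq_of_ne (hk.trans_lt hj).ne) hju
  push Not at h
  have hzero : ∀ j ≠ Fin.last n, e j = 0 := fun j hj => h j (Fin.lt_last_iff_ne_last.2 hj)
  refine absurd ?_ hne
  rw [degree_eq_sum, Fintype.sum_eq_single _ hzero]
  ext j
  by_cases hj : j = Fin.last n
  · subst hj; simp
  · simp [hzero j hj, Ne.symm hj]

end RevLex

theorem stmt9 (n p : ℕ) :
    (∀ m a : ℕ, (hm : m + 1 ≤ n) → 1 ≤ a → a ≤ p →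
      MvPolynomial.coeff
          (Finsupp.single (⟨m, by omega⟩ : Fin (n+1)) a +
            Finsupp.single (⟨m+1, by omega⟩ : Fin (n+1)) (p - a))
          (fcoeff n p (m * p + (p - a))) ≠ 0 ∧
        ∀ e ∈ (fcoeff n p (m * p + (p - a))).support,
          e ≠ Finsupp.single (⟨m, by omega⟩ : Fin (n+1)) a +
                Finsupp.single (⟨m+1, by omega⟩ : Fin (n+1)) (p - a) →
            revLexLt e (Finsupp.single (⟨m, by omega⟩ : Fin (n+1)) a +
                Finsupp.single (⟨m+1, by omega⟩ : Fin (n+1)) (p - a))) ∧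
    (MvPolynomial.coeff (Finsupp.single (⟨n, by omega⟩ : Fin (n+1)) p)
        (fcoeff n p (n * p)) ≠ 0 ∧
      ∀ e ∈ (fcoeff n p (n * p)).support,
        e ≠ Finsupp.single (⟨n, by omega⟩ : Fin (n+1)) p →
          revLexLt e (Finsupp.single (⟨n, by omega⟩ : Fin (n+1)) p)) := by
  refine ⟨fun m a hm _ hap => ?_, ?_⟩
  · set M : Fin (n + 1) := ⟨m, by omega⟩
    set M' : Fin (n + 1) := ⟨m + 1, by omega⟩
    have hwt₀ := weight_val_single_add_single_sub (m := M) (m' := M') rfl hap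
    refine ⟨coeff_fcoeff_ne_zero_iff.2 ⟨degree_single_add_single_sub hap, hwt₀⟩,
      fun e he hne => ?_⟩
    obtain ⟨hdeg, hwt⟩ := coeff_fcoeff_ne_zero_iff.1 (mem_support_iff.1 he)
    exact revLexLt_single_add_single rfl hap hdeg hwt hne
  · refine ⟨coeff_fcoeff_ne_zero_iff.2
      ⟨Finsupp.degree_single _ _, by simp [Finsupp.weight_single, mul_comm]⟩,
      fun e he hne => ?_⟩
    obtain ⟨rfl, -⟩ := coeff_fcoeff_ne_zero_iff.1 (mem_support_iff.1 he)
    exact revLexLt_single_last hne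
end

section
/- In the bivariate setting, the mixed derivative (x^p)^{(a,b)} of x^p with respect to ∂_s^a ∂_t^b in the partial differential polynomial ring equals Σ over tuples (j_i^s) of natural numbers indexed by pairs (i,s) with Σ j_i^s = p, Σ i·j_i^s = a, Σ s·j_i^s = b, of the coefficient p!·a!·b! / Π_{i,s} ( j_i^s! · (i!)^{j_i^s} · (s!)^{j_i^s} ) times Π_{i,s} (x^{(i,s)})^{j_i^s}. -/
/-!
For an exponent vector `j` on the indices `(k, ℓ)`, let
`e_j = ∏ X_{(k,ℓ)}^{j_{(k,ℓ)}} / (j_{(k,ℓ)}! (k! ℓ!)^{j_{(k,ℓ)}})` be its divided monomial, so that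
the right-hand side is `p! a! b! ∑ e_j` over the `j` of degree `p` and bidegree `(a, b)`. By the
Leibniz rule `∂_s` moves one unit of exponent from some `q` to `q + (1, 0)`, and the
normalisation of `e_j` is chosen so that the term of `∂_s e_j` landing in `e_{j'}` carries the
factor `r₁ j'_r`, where `r` is the index that received the unit. Summing over all `j` and
regrouping by `j'`, the coefficient of `e_{j'}` is `∑_r r₁ j'_r = a + 1`, which turns `a!` into
`(a + 1)!`; symmetrically for `∂_t`, and for `a = b = 0` the sum is the single term `x^p`.
-/

open MvPolynomial Finsupp Finset
open scoped Nat

variable {σ : Type*}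

def dividedDenom (g : σ → ℕ) (j : σ →₀ ℕ) : ℕ :=
  j.prod fun q n => n ! * g q ^ n

theorem dividedDenom_add_single (g : σ → ℕ) (j : σ →₀ ℕ) (q : σ) :
    dividedDenom g (j + single q 1) = (j q + 1) * g q * dividedDenom g j := by
  have split (k : σ →₀ ℕ) : dividedDenom g k = (k q)! * g q ^ k q * dividedDenom g (k.erase q) :=
    (mul_prod_erase' k q _ fun _ => by simp).symm
  rw [split, split j, erase_add, erase_single, add_zero, Finsupp.add_apply, single_eq_same,
    Nat.factorial_succ, pow_succ]
  ring

theorem dividedDenom_ne_zero {g : σ → ℕ} (hg : ∀ q, g q ≠ 0) (j : σ →₀ ℕ) :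
    dividedDenom g j ≠ 0 :=
  Finset.prod_ne_zero_iff.2 fun q _ => mul_ne_zero (Nat.factorial_ne_zero _) (pow_ne_zero _ (hg q))

noncomputable def dividedMonomial (K : Type*) [Field K] (g : σ → ℕ) (j : σ →₀ ℕ) :
    MvPolynomial σ K :=
  (dividedDenom g j : K)⁻¹ • monomial j 1

noncomputable def shiftExponent (j : σ →₀ ℕ) (q r : σ) : σ →₀ ℕ :=
  j - single q 1 + single r 1

theorem shiftExponent_shiftExponent {j : σ →₀ ℕ} {q : σ} (hq : j q ≠ 0) (r : σ) :
    shiftExponent (shiftExponent j q r) r q = j := by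
  rw [shiftExponent, shiftExponent, add_tsub_cancel_right, sub_add_single_one_cancel hq]

theorem shiftExponent_apply_ne_zero (j : σ →₀ ℕ) (q r : σ) : shiftExponent j q r r ≠ 0 := by
  simp [shiftExponent]

theorem weight_shiftExponent (w : σ → ℕ) {j : σ →₀ ℕ} {q : σ} (hq : j q ≠ 0) (r : σ) :
    weight w (shiftExponent j q r) + w q = weight w j + w r := by
  rw [shiftExponent, map_add, weight_single, smul_eq_mul, one_mul, add_right_comm,
    weight_sub_single_add hq]

theorem derivation_monomial_one {R : Type*} [CommSemiring R] {f : σ → σ}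
    (D : Derivation R (MvPolynomial σ R) (MvPolynomial σ R)) (hD : ∀ q, D (X q) = X (f q))
    (j : σ →₀ ℕ) :
    D (monomial j 1) = ∑ q ∈ j.support, (j q : R) • monomial (shiftExponent j q (f q)) 1 := by
  have hmk : D = mkDerivation R fun q => X (f q) :=
    derivation_ext fun q => by rw [mkDerivation_X, hD]
  rw [hmk, mkDerivation_monomial, one_smul, Finsupp.sum]
  refine Finset.sum_congr rfl fun q _ => ?_
  rw [smul_eq_mul, X, monomial_mul, mul_one, smul_monomial, smul_eq_mul, mul_one, shiftExponent]

/-- An abstraction of `(k, ℓ) ↦ (k + 1, ℓ)` with `weight (k, ℓ) = k` and `scale (k, ℓ) = k! ℓ!`. -/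
structure IndexRaising (σ : Type*) where
  raise : σ → σ
  lower : σ → σ
  weight : σ → ℕ
  scale : σ → ℕ
  lower_raise : ∀ q, lower (raise q) = q
  raise_lower : ∀ r, weight r ≠ 0 → raise (lower r) = r
  weight_raise : ∀ q, weight (raise q) = weight q + 1
  scale_raise : ∀ q, scale (raise q) = (weight q + 1) * scale q
  scale_ne_zero : ∀ q, scale q ≠ 0

namespace IndexRaising

variable {K : Type*} [Field K] [CharZero K] (R : IndexRaising σ)
  {D : Derivation K (MvPolynomial σ K) (MvPolynomial σ K)}

theorem derivation_dividedMonomial (hD : ∀ q, D (X q) = X (R.raise q)) (j : σ →₀ ℕ) :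
    D (dividedMonomial K R.scale j) = ∑ q ∈ j.support,
      ((R.weight (R.raise q) * shiftExponent j q (R.raise q) (R.raise q) : ℕ) : K) •
        dividedMonomial K R.scale (shiftExponent j q (R.raise q)) := by
  rw [dividedMonomial, D.map_smul, derivation_monomial_one D hD, Finset.smul_sum]
  refine Finset.sum_congr rfl fun q hq => ?_
  rw [dividedMonomial, smul_smul, smul_smul]
  congr 1
  obtain ⟨j₀, rfl⟩ : ∃ j₀, j = j₀ + single q 1 :=
    ⟨_, (sub_add_single_one_cancel (Finsupp.mem_support_iff.1 hq)).symm⟩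
  have hraise : shiftExponent (j₀ + single q 1) q (R.raise q) = j₀ + single (R.raise q) 1 := by
    rw [shiftExponent, add_tsub_cancel_right]
  rw [hraise, dividedDenom_add_single, dividedDenom_add_single, R.scale_raise, R.weight_raise]
  have hdenom := dividedDenom_ne_zero R.scale_ne_zero j₀
  have hscale := R.scale_ne_zero q
  simp only [Finsupp.add_apply, single_eq_same]
  push_cast
  field_simp

theorem derivation_sum_dividedMonomial (hD : ∀ q, D (X q) = X (R.raise q))
    {S S' : Finset (σ →₀ ℕ)} {a : ℕ}
    (hS : ∀ j ∈ S, ∀ q, j q ≠ 0 → shiftExponent j q (R.raise q) ∈ S')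
    (hS' : ∀ j ∈ S', ∀ r, j r ≠ 0 → R.weight r ≠ 0 → shiftExponent j r (R.lower r) ∈ S)
    (hweight : ∀ j ∈ S', Finsupp.weight R.weight j = a + 1) :
    D (∑ j ∈ S, dividedMonomial K R.scale j) =
      ((a + 1 : ℕ) : K) • ∑ j ∈ S', dividedMonomial K R.scale j := by
  have hsplit (j) (hj : j ∈ S') : ((a + 1 : ℕ) : K) • dividedMonomial K R.scale j =
      ∑ r ∈ j.support with R.weight r ≠ 0,
        ((R.weight r * j r : ℕ) : K) • dividedMonomial K R.scale j := by
    rw [sum_filter_of_ne (p := fun r => R.weight r ≠ 0) fun r _ hr hw => hr (by simp [hw]),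
      ← Finset.sum_smul, ← Nat.cast_sum, ← hweight j hj, weight_apply, Finsupp.sum]
    simp_rw [smul_eq_mul, mul_comm]
  rw [map_sum, Finset.smul_sum, Finset.sum_congr rfl hsplit]
  simp_rw [R.derivation_dividedMonomial hD]
  rw [Finset.sum_sigma', Finset.sum_sigma']
  refine Finset.sum_nbij' (fun x => ⟨shiftExponent x.1 x.2 (R.raise x.2), R.raise x.2⟩)
    (fun y => ⟨shiftExponent y.1 y.2 (R.lower y.2), R.lower y.2⟩) ?_ ?_ ?_ ?_ fun _ _ => rfl
  · rintro ⟨j, q⟩ h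
    simp only [Finset.mem_sigma, Finsupp.mem_support_iff, Finset.mem_filter] at h ⊢
    exact ⟨hS j h.1 q h.2, shiftExponent_apply_ne_zero j q _, by simp [R.weight_raise]⟩
  · rintro ⟨j, r⟩ h
    simp only [Finset.mem_sigma, Finsupp.mem_support_iff, Finset.mem_filter] at h ⊢
    exact ⟨hS' j h.1 r h.2.1 h.2.2, shiftExponent_apply_ne_zero j r _⟩
  · rintro ⟨j, q⟩ h
    simp only [Finset.mem_sigma, Finsupp.mem_support_iff] at h
    simp only [R.lower_raise, shiftExponent_shiftExponent h.2]
  · rintro ⟨j, r⟩ h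
    simp only [Finset.mem_sigma, Finsupp.mem_support_iff, Finset.mem_filter] at h
    simp only [R.raise_lower r h.2.2, shiftExponent_shiftExponent h.2.1]

end IndexRaising

theorem factorial_pow_dvd_factorial_mul (m n : ℕ) : m ! ^ n ∣ (n * m)! := by
  rcases eq_or_ne m 0 with rfl | hm
  · simp
  · rw [← Nat.uniformBell_mul_eq n hm]
    exact (dvd_mul_left _ _).mul_right _

def factorialScale (q : ℕ × ℕ) : ℕ := q.1 ! * q.2 !

theorem factorialScale_ne_zero (q : ℕ × ℕ) : factorialScale q ≠ 0 :=
  mul_ne_zero (Nat.factorial_ne_zero _) (Nat.factorial_ne_zero _)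

theorem dividedDenom_factorialScale_dvd (j : ℕ × ℕ →₀ ℕ) :
    dividedDenom factorialScale j ∣
      (degree j)! * (weight Prod.fst j)! * (weight Prod.snd j)! := by
  have hsplit : dividedDenom factorialScale j = (∏ q ∈ j.support, (j q)!) *
      (∏ q ∈ j.support, q.1 ! ^ j q) * ∏ q ∈ j.support, q.2 ! ^ j q := by
    simp only [dividedDenom, Finsupp.prod, factorialScale, mul_pow, prod_mul_distrib, mul_assoc]
  rw [hsplit]
  refine mul_dvd_mul (mul_dvd_mul (Nat.prod_factorial_dvd_factorial_sum _ _) ?_) ?_ <;>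
  · exact (prod_dvd_prod_of_dvd _ _ fun q _ => factorial_pow_dvd_factorial_mul _ _).trans
      (Nat.prod_factorial_dvd_factorial_sum _ _)

namespace IndexRaising

def fst : IndexRaising (ℕ × ℕ) where
  raise q := (q.1 + 1, q.2)
  lower q := (q.1 - 1, q.2)
  weight := Prod.fst
  scale := factorialScale
  lower_raise _ := rfl
  raise_lower r hr := Prod.ext (Nat.sub_add_cancel (Nat.pos_of_ne_zero hr)) rfl
  weight_raise _ := rfl
  scale_raise q := by simp only [factorialScale, Nat.factorial_succ]; ring
  scale_ne_zero := factorialScale_ne_zero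

def snd : IndexRaising (ℕ × ℕ) where
  raise q := (q.1, q.2 + 1)
  lower q := (q.1, q.2 - 1)
  weight := Prod.snd
  scale := factorialScale
  lower_raise _ := rfl
  raise_lower r hr := Prod.ext rfl (Nat.sub_add_cancel (Nat.pos_of_ne_zero hr))
  weight_raise _ := rfl
  scale_raise q := by simp only [factorialScale, Nat.factorial_succ]; ring
  scale_ne_zero := factorialScale_ne_zero

end IndexRaising

-- Irreducible: otherwise unification unfolds this `Finset` computation and becomes very slow.
@[irreducible]
def bidegreeExponents (p a b : ℕ) : Finset (ℕ × ℕ →₀ ℕ) :=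
  ((Iic a ×ˢ Iic b).finsuppAntidiag p).filter
    fun j => (∑ q ∈ Iic a ×ˢ Iic b, q.1 * j q) = a ∧ (∑ q ∈ Iic a ×ˢ Iic b, q.2 * j q) = b

theorem support_subset_of_mem_bidegreeExponents {p a b : ℕ} {j : ℕ × ℕ →₀ ℕ}
    (hj : j ∈ bidegreeExponents p a b) : j.support ⊆ Iic a ×ˢ Iic b := by
  rw [bidegreeExponents] at hj
  exact (mem_finsuppAntidiag.1 (mem_filter.1 hj).1).2

theorem mem_bidegreeExponents {p a b : ℕ} {j : ℕ × ℕ →₀ ℕ} :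
    j ∈ bidegreeExponents p a b ↔
      degree j = p ∧ weight Prod.fst j = a ∧ weight Prod.snd j = b := by
  have hsum (w : ℕ × ℕ → ℕ) (hj : j.support ⊆ Iic a ×ˢ Iic b) :
      ∑ q ∈ Iic a ×ˢ Iic b, w q * j q = weight w j := by
    rw [weight_apply, sum_of_support_subset j hj (fun q c => c • w q) fun _ _ => zero_smul ℕ _]
    simp_rw [smul_eq_mul, mul_comm]
  rw [bidegreeExponents, mem_filter, mem_finsuppAntidiag']
  constructor
  · rintro ⟨⟨hp, hj⟩, ha, hb⟩
    exact ⟨hp, (hsum _ hj).symm.trans ha, (hsum _ hj).symm.trans hb⟩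
  · rintro ⟨hp, ha, hb⟩
    have hj : j.support ⊆ Iic a ×ˢ Iic b := fun q hq => by
      have hq := Finsupp.mem_support_iff.1 hq
      rw [mem_product, mem_Iic, mem_Iic]
      exact ⟨ha ▸ le_weight_of_ne_zero' Prod.fst hq, hb ▸ le_weight_of_ne_zero' Prod.snd hq⟩
    exact ⟨⟨hp, hj⟩, (hsum _ hj).trans ha, (hsum _ hj).trans hb⟩

theorem shiftExponent_mem_bidegreeExponents {p a b a' b' : ℕ} {j : ℕ × ℕ →₀ ℕ} {q r : ℕ × ℕ}
    (hj : j ∈ bidegreeExponents p a b) (hq : j q ≠ 0)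
    (ha : a + r.1 = a' + q.1) (hb : b + r.2 = b' + q.2) :
    shiftExponent j q r ∈ bidegreeExponents p a' b' := by
  rw [mem_bidegreeExponents, degree_eq_weight_one] at hj ⊢
  have hdeg := weight_shiftExponent (fun _ => 1) hq r
  have hfst := weight_shiftExponent Prod.fst hq r
  have hsnd := weight_shiftExponent Prod.snd hq r
  omega

theorem bidegreeExponents_zero_zero (p : ℕ) : bidegreeExponents p 0 0 = {single (0, 0) p} := by
  ext j
  rw [mem_bidegreeExponents, mem_singleton]
  constructor
  · rintro ⟨hp, ha, hb⟩
    have hsupp : j.support ⊆ {(0, 0)} := fun q hq => by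
      have hq := Finsupp.mem_support_iff.1 hq
      have hfst := le_weight_of_ne_zero' Prod.fst hq
      have hsnd := le_weight_of_ne_zero' Prod.snd hq
      rw [mem_singleton]
      ext <;> omega
    rw [support_subset_singleton.1 hsupp, degree_single] at hp
    rw [support_subset_singleton.1 hsupp, hp]
  · rintro rfl
    simp [weight_single]

section PowerDerivative

variable (K : Type*) [Field K]

noncomputable def powerDerivSum (p a b : ℕ) : MvPolynomial (ℕ × ℕ) K :=
  ((p ! * a ! * b ! : ℕ) : K) • ∑ j ∈ bidegreeExponents p a b, dividedMonomial K factorialScale j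

variable {K} [CharZero K]

theorem powerDerivSum_zero_zero (p : ℕ) : powerDerivSum K p 0 0 = X (0, 0) ^ p := by
  rw [powerDerivSum, bidegreeExponents_zero_zero, sum_singleton, dividedMonomial, smul_smul,
    dividedDenom, prod_single_index (by simp), X_pow_eq_monomial]
  simp [factorialScale, Nat.factorial_ne_zero]

theorem powerDerivSum_succ_fst {ds : Derivation K (MvPolynomial (ℕ × ℕ) K) (MvPolynomial (ℕ × ℕ) K)}
    (hs : ∀ k l : ℕ, ds (X (k, l)) = X (k + 1, l)) (p a b : ℕ) :
    ds (powerDerivSum K p a b) = powerDerivSum K p (a + 1) b := by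
  have h := IndexRaising.fst.derivation_sum_dividedMonomial (fun q => hs q.1 q.2)
      (S := bidegreeExponents p a b) (S' := bidegreeExponents p (a + 1) b)
      (fun j hj q hq => shiftExponent_mem_bidegreeExponents hj hq
        (by simp only [IndexRaising.fst]; omega) rfl)
      (fun j hj r hr hr0 => shiftExponent_mem_bidegreeExponents hj hr
        (by simp only [IndexRaising.fst] at hr0 ⊢; omega) rfl)
      (fun j hj => (mem_bidegreeExponents.1 hj).2.1)
  dsimp only [IndexRaising.fst] at h
  rw [powerDerivSum, powerDerivSum, ds.map_smul, h, smul_smul, Nat.factorial_succ]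
  push_cast
  ring_nf

theorem powerDerivSum_succ_snd {dt : Derivation K (MvPolynomial (ℕ × ℕ) K) (MvPolynomial (ℕ × ℕ) K)}
    (ht : ∀ k l : ℕ, dt (X (k, l)) = X (k, l + 1)) (p a b : ℕ) :
    dt (powerDerivSum K p a b) = powerDerivSum K p a (b + 1) := by
  have h := IndexRaising.snd.derivation_sum_dividedMonomial (fun q => ht q.1 q.2)
      (S := bidegreeExponents p a b) (S' := bidegreeExponents p a (b + 1))
      (fun j hj q hq => shiftExponent_mem_bidegreeExponents hj hq rfl
        (by simp only [IndexRaising.snd]; omega))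
      (fun j hj r hr hr0 => shiftExponent_mem_bidegreeExponents hj hr rfl
        (by simp only [IndexRaising.snd] at hr0 ⊢; omega))
      (fun j hj => (mem_bidegreeExponents.1 hj).2.2)
  dsimp only [IndexRaising.snd] at h
  rw [powerDerivSum, powerDerivSum, dt.map_smul, h, smul_smul, Nat.factorial_succ]
  push_cast
  ring_nf

theorem natCast_div_mul_prod_X_pow {p a b : ℕ} {j : ℕ × ℕ →₀ ℕ}
    (hj : j ∈ bidegreeExponents p a b) :
    ((p ! * a ! * b ! / ∏ q ∈ Iic a ×ˢ Iic b, ((j q)! * q.1 ! ^ j q * q.2 ! ^ j q) : ℕ) :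
        MvPolynomial (ℕ × ℕ) K) * ∏ q ∈ Iic a ×ˢ Iic b, X q ^ j q =
      ((p ! * a ! * b ! : ℕ) : K) • dividedMonomial K factorialScale j := by
  have hsupp := support_subset_of_mem_bidegreeExponents hj
  have hdenom : ∏ q ∈ Iic a ×ˢ Iic b, ((j q)! * q.1 ! ^ j q * q.2 ! ^ j q) =
      dividedDenom factorialScale j := by
    rw [dividedDenom, prod_of_support_subset j hsupp _ fun _ _ => by simp]
    simp only [factorialScale, mul_pow, mul_assoc]
  have hmonomial : ∏ q ∈ Iic a ×ˢ Iic b, X q ^ j q = monomial j (1 : K) := by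
    rw [monomial_eq, C_1, one_mul, prod_of_support_subset j hsupp _ fun _ _ => pow_zero _]
  obtain ⟨hp, ha, hb⟩ := mem_bidegreeExponents.1 hj
  have hdvd := dividedDenom_factorialScale_dvd j
  rw [hp, ha, hb] at hdvd
  have hne : (dividedDenom factorialScale j : K) ≠ 0 :=
    Nat.cast_ne_zero.2 (dividedDenom_ne_zero factorialScale_ne_zero j)
  rw [hdenom, hmonomial, dividedMonomial, smul_smul, ← map_natCast (C : K →+* _),
    ← smul_eq_C_mul, Nat.cast_div hdvd hne, div_eq_mul_inv]

end PowerDerivative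

theorem stmt17 (p a b : ℕ)
    (ds dt : Derivation ℂ (MvPolynomial (ℕ × ℕ) ℂ) (MvPolynomial (ℕ × ℕ) ℂ))
    (hs : ∀ k l : ℕ, ds (MvPolynomial.X (k, l)) = MvPolynomial.X (k+1, l))
    (ht : ∀ k l : ℕ, dt (MvPolynomial.X (k, l)) = MvPolynomial.X (k, l+1)) :
    (fun y => ds y)^[a] ((fun y => dt y)^[b]
        ((MvPolynomial.X (0, 0) : MvPolynomial (ℕ × ℕ) ℂ) ^ p)) =
    ∑ j ∈ ((Finset.Iic a ×ˢ Finset.Iic b).finsuppAntidiag p).filter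
        (fun j => (∑ q ∈ Finset.Iic a ×ˢ Finset.Iic b, q.1 * j q) = a ∧
                  (∑ q ∈ Finset.Iic a ×ˢ Finset.Iic b, q.2 * j q) = b),
      ((p.factorial * a.factorial * b.factorial /
          ∏ q ∈ Finset.Iic a ×ˢ Finset.Iic b,
            ((j q).factorial * q.1.factorial ^ (j q) * q.2.factorial ^ (j q)) : ℕ) :
        MvPolynomial (ℕ × ℕ) ℂ) *
        ∏ q ∈ Finset.Iic a ×ˢ Finset.Iic b, MvPolynomial.X q ^ j q := by
  have hdt : (fun y => dt y)^[b] (X (0, 0) ^ p) = powerDerivSum ℂ p 0 b := by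
    induction b with
    | zero => exact (powerDerivSum_zero_zero p).symm
    | succ n ih => rw [Function.iterate_succ_apply', ih, powerDerivSum_succ_snd ht]
  have hds : (fun y => ds y)^[a] (powerDerivSum ℂ p 0 b) = powerDerivSum ℂ p a b := by
    induction a with
    | zero => rfl
    | succ n ih => rw [Function.iterate_succ_apply', ih, powerDerivSum_succ_fst hs]
  rw [hdt, hds, powerDerivSum, Finset.smul_sum]
  refine (Finset.sum_congr ?_ fun j hj => natCast_div_mul_prod_X_pow hj).symm
  rw [bidegreeExponents]
end
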